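/- Let α = [n, p₁,…,p_k] with p = ∑ pⱼ, and suppose α = ∑_{j=1}^l mⱼβⱼ with mⱼ ∈ ℤ_{>0} and ⟨βᵢ,βⱼ⟩ = 0 for all i ≠ j, where ⟨·,·⟩ is the Euler form of the star quiver Q_k. Then for every i, p·βᵢ[0] = n·(βᵢ[1]+⋯+βᵢ[k]). -/
import Mathlib

theorem star_quiver_d_implies_c (k l : ℕ) (n p : ℤ)
    (euler : (Fin (k + 1) → ℤ) → (Fin (k + 1) → ℤ) → ℤ)
    (heuler : euler = fun a b => ∑ i, a i * b i - (∑ j : Fin k, a j.succ) * b 0)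
    (α : Fin (k + 1) → ℤ) (hn : α 0 = n) (hp : p = ∑ j : Fin k, α j.succ)
    (β : Fin l → (Fin (k + 1) → ℤ)) (c : Fin l → ℤ) (hc : ∀ j, 0 < c j)
    (hα : α = ∑ j, c j • β j)
    (horth : ∀ i j, i ≠ j → euler (β i) (β j) = 0) :
    ∀ i, p * β i 0 = n * ∑ j : Fin k, β i j.succ := by
  intro i
  have lin1 : ∀ b, euler α b = ∑ j, c j * euler (β j) b := by
    intro b
    subst heuler hα
    simp only [Finset.sum_apply, Pi.smul_apply, smul_eq_mul, Finset.sum_mul,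
      mul_sub, Finset.mul_sum, Finset.sum_sub_distrib]
    congr 1
    · rw [Finset.sum_comm]
      exact Finset.sum_congr rfl fun j _ => Finset.sum_congr rfl fun x _ => by ring
    · rw [Finset.sum_comm]
      exact Finset.sum_congr rfl fun j _ => Finset.sum_congr rfl fun x _ => by ring
  have lin2 : ∀ a, euler a α = ∑ j, c j * euler a (β j) := by
    intro a
    subst heuler hα
    simp only [Finset.sum_apply, Pi.smul_apply, smul_eq_mul, Finset.sum_mul,
      mul_sub, Finset.mul_sum, Finset.sum_sub_distrib]
    congr 1
    · rw [Finset.sum_comm]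
      exact Finset.sum_congr rfl fun j _ => Finset.sum_congr rfl fun x _ => by ring
    · exact Finset.sum_congr rfl fun j _ => Finset.sum_congr rfl fun x _ => by ring
  have key : euler α (β i) = euler (β i) α := by
    rw [lin1, lin2]
    refine Finset.sum_congr rfl fun j _ => ?_
    rcases eq_or_ne j i with h | h
    · subst h; rfl
    · rw [horth j i h, horth i j (Ne.symm h)]
  subst heuler hp hn
  simp only at key
  have comm : ∑ i1 : Fin (k+1), α i1 * β i i1 = ∑ i1 : Fin (k+1), β i i1 * α i1 :=
    Finset.sum_congr rfl fun _ _ => mul_comm _ _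
  linarith [key, comm]
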